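/- Let B₁ and B₂ be digit blocks of the same length k ≥ 1 such that the first digit of B₁ is nonzero and the first digit of B₂ is zero. Then for every ℓ ≥ k, occ_no(B₁, s_ℓ) − occ_no(B₂, s_ℓ) = 10^{ℓ−k}. -/

import Mathlib

open scoped Classical

/-- The `i`-th decimal digit (for `i ≥ 1`) of a real number `α`, using the floor
convention, which for numbers admitting two decimal expansions selects the
expansion ending in a tail of `0`s. -/
noncomputable def digit (α : ℝ) (i : ℕ) : ℕ := (⌊α * 10 ^ i⌋ % 10).toNat

/-- Number of occurrences of the digit block `B` (of length `k`) as consecutive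
digits among the first `N` decimal digits of `α`:
`occ α B N = #{i : 1 ≤ i ≤ N - k + 1 ∧ (α_i, …, α_{i+k-1}) = B}`. -/
noncomputable def occ {k : ℕ} (α : ℝ) (B : Fin k → Fin 10) (N : ℕ) : ℕ :=
  ((Finset.Icc 1 N).filter fun i =>
    i + k ≤ N + 1 ∧ ∀ j : Fin k, digit α (i + (j : ℕ)) = (B j : ℕ)).card

/-- Discrepancy of the first `N` terms of a sequence `(x_n)_{n ≥ 1}` of points of `[0,1)`:
the supremum over `0 ≤ a < b < 1` of `|#{n ≤ N : x n ∈ [a,b)}/N - (b - a)|`. -/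
noncomputable def discSeq (x : ℕ → ℝ) (N : ℕ) : ℝ :=
  sSup {d : ℝ | ∃ a b : ℝ, 0 ≤ a ∧ a < b ∧ b < 1 ∧
    d = |(((Finset.Icc 1 N).filter fun n => x n ∈ Set.Ico a b).card : ℝ) / N - (b - a)|}

/-- Discrepancy of a real number for base 10: the discrepancy of the sequence
`(10^(n-1) α mod 1)_{n ≥ 1}`. -/
noncomputable def D (α : ℝ) (N : ℕ) : ℝ :=
  discSeq (fun n => Int.fract (10 ^ (n - 1) * α)) N

/-- `T v` is the total number of digits in the concatenation of the decimal
representations of `1, 2, …, v`. -/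
def T (v : ℕ) : ℕ := ∑ j ∈ Finset.Icc 1 v, (Nat.digits 10 j).length

/-- The Champernowne constant `c = 0.123456789101112…`, the concatenation of the
positive integers in base 10: the term `m` ends at decimal position `T m`. -/
noncomputable def champ : ℝ := ∑' m : ℕ, (m : ℝ) / 10 ^ T m

/-- `vOf N` is the least `v` with `T v ≥ N` (the term of the concatenation
containing the `N`-th digit). -/
noncomputable def vOf (N : ℕ) : ℕ := sInf {v | N ≤ T v}

/-- `nOf N` is the number of decimal digits of `vOf N`. -/
noncomputable def nOf (N : ℕ) : ℕ := (Nat.digits 10 (vOf N)).length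

/-- Number of non-overlapping occurrences of the block `B` (length `k`) in the string
`s_ℓ` (the concatenation of all `ℓ`-digit integers in increasing order): the number of
pairs `(y, j)` with `10^(ℓ-1) ≤ y < 10^ℓ`, `1 ≤ j ≤ ℓ - k + 1`, such that the digits of
`y` in positions `j, …, j + k - 1` (counted from the left) equal `B`. -/
def occNoSeg {k : ℕ} (B : Fin k → Fin 10) (ℓ : ℕ) : ℕ :=
  ((Finset.Ico (10 ^ (ℓ - 1)) (10 ^ ℓ) ×ˢ Finset.Icc 1 (ℓ - k + 1)).filter fun p =>
    ∀ i : Fin k, p.1 / 10 ^ (ℓ - (p.2 + (i : ℕ))) % 10 = (B i : ℕ)).card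

/-- Number of occurrences of the block `B` (length `k ≤ ℓ`) in the string `s_ℓ` that
straddle the boundary between two consecutive `ℓ`-digit terms `y` and `y + 1`:
the number of pairs `(y, j)` with `10^(ℓ-1) ≤ y < 10^ℓ - 1` and `1 ≤ j ≤ k - 1` such
that the last `j` digits of `y` are `(b₁, …, b_j)` and the first `k - j` digits of
`y + 1` are `(b_{j+1}, …, b_k)`. -/
def occOSeg {k : ℕ} (B : Fin k → Fin 10) (ℓ : ℕ) : ℕ :=
  ((Finset.Ico (10 ^ (ℓ - 1)) (10 ^ ℓ - 1) ×ˢ Finset.Ico 1 k).filter fun p =>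
    (∀ i : Fin k, (i : ℕ) < p.2 → p.1 / 10 ^ (p.2 - 1 - (i : ℕ)) % 10 = (B i : ℕ)) ∧
    (∀ i : Fin k, p.2 ≤ (i : ℕ) →
      (p.1 + 1) / 10 ^ (ℓ - 1 - ((i : ℕ) - p.2)) % 10 = (B i : ℕ))).card

/-!
Write `e = ℓ + 1 - j - k`; the `k` digits of `y` starting at position `j` are then the digits of
the window `⌊y / 10^e⌋ mod 10^k`, so `occ_no(B, s_ℓ)` is a sum over `j` of the number of
`ℓ`-digit `y` whose window equals the number `B` spells. For `j ≥ 2` the window avoids the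
leading digit of `y`, and the `ℓ`-digit numbers are spread evenly over all `10^k` window values,
so these terms do not depend on `B`. For `j = 1` the window is `⌊y / 10^(ℓ-k)⌋`, which runs over
the `k`-digit numbers, each taken `10^(ℓ-k)` times: the term is `10^(ℓ-k)` for `B₁` and `0` for
`B₂`, whose value has fewer than `k` digits.
-/

open Finset

section BlockValue

variable {b k : ℕ}

/-- The number whose base-`b` digits, most significant first, are `B 0, …, B (k - 1)`
(`finFunctionFinEquiv` reads its argument from the least significant digit). -/
def blockValue (B : Fin k → Fin b) : ℕ := finFunctionFinEquiv (B ∘ Fin.rev)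

lemma blockValue_lt (B : Fin k → Fin b) : blockValue B < b ^ k :=
  (finFunctionFinEquiv (B ∘ Fin.rev)).isLt

lemma digits_eq_iff_eq_blockValue (B : Fin k → Fin b) {w : ℕ} (hw : w < b ^ k) :
    (∀ i : Fin k, w / b ^ (k - 1 - i) % b = B i) ↔ w = blockValue B := by
  have key : w = blockValue B ↔ finFunctionFinEquiv.symm ⟨w, hw⟩ = B ∘ Fin.rev := by
    rw [Equiv.symm_apply_eq]
    exact (Fin.ext_iff (a := ⟨w, hw⟩)).symm
  rw [key, funext_iff, Fin.rev_surjective.forall]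
  refine forall_congr' fun i => ?_
  rw [Fin.ext_iff, finFunctionFinEquiv_symm_apply_val, Function.comp_apply, Fin.val_rev]
  grind

lemma le_blockValue_iff (hk : 0 < k) (B : Fin k → Fin b) :
    b ^ (k - 1) ≤ blockValue B ↔ (B ⟨0, hk⟩ : ℕ) ≠ 0 := by
  have hb : 0 < b := (B ⟨0, hk⟩).pos
  have hlead := (digits_eq_iff_eq_blockValue B (blockValue_lt B)).2 rfl ⟨0, hk⟩
  simp only [Nat.sub_zero] at hlead
  rw [Nat.mod_eq_of_lt] at hlead
  · rw [← hlead, ← Nat.one_le_iff_ne_zero, Nat.one_le_div_iff (by positivity)]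
  · rw [Nat.div_lt_iff_lt_mul (by positivity), ← pow_succ', Nat.sub_add_cancel hk]
    exact blockValue_lt B

end BlockValue

lemma div_pow_mod_pow_div_pow_mod (y b e : ℕ) {k s : ℕ} (hs : s < k) :
    y / b ^ e % b ^ k / b ^ s % b = y / b ^ (e + s) % b := by
  rw [show b ^ k = b ^ s * b ^ (k - s) by rw [← pow_add]; congr 1; omega,
    Nat.mod_mul_right_div_self, Nat.mod_mod_of_dvd _ (dvd_pow_self b (by omega)),
    Nat.div_div_eq_div_mul, ← pow_add]

section Counting

variable {E K m : ℕ}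

lemma card_filter_div_mod_eq (hE : 0 < E) (hm : m < K) (a c : ℕ) :
    #{y ∈ Ico (a * (E * K)) (c * (E * K)) | y / E % K = m} = (c - a) * E := by
  have hEK : 0 < E * K := Nat.mul_pos hE (by omega)
  have hlow : ∀ r < E, m * E + r < E * K := fun r hr => by nlinarith
  have hsplit : ∀ q r, q * (E * K) + m * E + r = r + E * (m + K * q) := fun q r => by ring
  have hsplit' : ∀ q r, q * (E * K) + m * E + r = (m * E + r) + E * K * q := fun q r => by ring
  rw [show (c - a) * E = #(Ico a c ×ˢ range E) by simp [card_product]]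
  symm
  refine card_nbij' (fun p => p.1 * (E * K) + m * E + p.2) (fun y => (y / (E * K), y % E))
    ?_ ?_ ?_ ?_
  · rintro ⟨q, r⟩ h
    simp only [mem_coe, mem_product, mem_Ico, mem_range, mem_filter] at h ⊢
    refine ⟨⟨?_, ?_⟩, ?_⟩
    · nlinarith
    · nlinarith [hlow r h.2]
    · rw [hsplit, Nat.add_mul_div_left _ _ hE, Nat.div_eq_of_lt h.2, zero_add,
        Nat.add_mul_mod_self_left, Nat.mod_eq_of_lt hm]
  · intro y h
    simp only [mem_coe, mem_product, mem_Ico, mem_range, mem_filter] at h ⊢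
    refine ⟨⟨?_, ?_⟩, Nat.mod_lt _ hE⟩
    · exact (Nat.le_div_iff_mul_le hEK).2 h.1.1
    · exact (Nat.div_lt_iff_lt_mul hEK).2 h.1.2
  · rintro ⟨q, r⟩ h
    simp only [mem_coe, mem_product, mem_Ico, mem_range] at h
    simp only [Prod.mk.injEq]
    constructor
    · rw [hsplit', Nat.add_mul_div_left _ _ hEK, Nat.div_eq_of_lt (hlow r h.2), zero_add]
    · rw [hsplit, Nat.add_mul_mod_self_left, Nat.mod_eq_of_lt h.2]
  · intro y h
    simp only [mem_coe, mem_filter] at h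
    have hlowPart := Nat.mod_mul (x := y) (a := E) (b := K)
    have hhighPart := Nat.div_add_mod y (E * K)
    simp only [← h.2]
    linarith

lemma card_filter_div_mod_eq_ite (hE : 0 < E) (hm : m < K) (c : ℕ) :
    #{y ∈ Ico (c * E) (K * E) | y / E % K = m} = if c ≤ m then E else 0 := by
  have hmod : ∀ y ∈ Ico (c * E) (K * E), y / E % K = y / E := fun y hy =>
    Nat.mod_eq_of_lt ((Nat.div_lt_iff_lt_mul hE).2 (mem_Ico.1 hy).2)
  rw [filter_congr fun y hy => by rw [hmod y hy]]
  split_ifs with hc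
  · have hcm : c * E ≤ m * E := Nat.mul_le_mul_right E hc
    have hmK : m * E + E ≤ K * E := by simpa [add_mul] using Nat.mul_le_mul_right E hm
    rw [show {y ∈ Ico (c * E) (K * E) | y / E = m} = Ico (m * E) (m * E + E) by
      ext y
      simp only [mem_filter, mem_Ico, Nat.div_eq_iff hE]
      omega]
    simp
  · refine card_eq_zero.2 (filter_eq_empty_iff.2 fun y hy => ?_)
    have := (Nat.le_div_iff_mul_le hE).2 (mem_Ico.1 hy).1
    omega

end Counting

section Windows

variable {b ℓ e k m : ℕ}

lemma card_filter_window_eq_of_lt (hb : 0 < b) (h : e + k < ℓ) (hm : m < b ^ k) :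
    #{y ∈ Ico (b ^ (ℓ - 1)) (b ^ ℓ) | y / b ^ e % b ^ k = m} =
      (b ^ (ℓ - e - k) - b ^ (ℓ - e - k - 1)) * b ^ e := by
  have hlow : b ^ (ℓ - 1) = b ^ (ℓ - e - k - 1) * (b ^ e * b ^ k) := by
    rw [← pow_add, ← pow_add]; congr 1; omega
  have hhigh : b ^ ℓ = b ^ (ℓ - e - k) * (b ^ e * b ^ k) := by
    rw [← pow_add, ← pow_add]; congr 1; omega
  rw [hlow, hhigh, card_filter_div_mod_eq (by positivity) hm]

lemma card_filter_window_eq_of_eq (hb : 0 < b) (hk : 0 < k) (h : e + k = ℓ) (hm : m < b ^ k) :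
    #{y ∈ Ico (b ^ (ℓ - 1)) (b ^ ℓ) | y / b ^ e % b ^ k = m} =
      if b ^ (k - 1) ≤ m then b ^ e else 0 := by
  have hlow : b ^ (ℓ - 1) = b ^ (k - 1) * b ^ e := by rw [← pow_add]; congr 1; omega
  have hhigh : b ^ ℓ = b ^ k * b ^ e := by rw [← pow_add]; congr 1; omega
  rw [hlow, hhigh, card_filter_div_mod_eq_ite (by positivity) hm]

end Windows

lemma occNoSeg_eq_sum {k ℓ : ℕ} (B : Fin k → Fin 10) (hℓ : k ≤ ℓ) :
    occNoSeg B ℓ = ∑ j ∈ Icc 1 (ℓ - k + 1),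
      #{y ∈ Ico (10 ^ (ℓ - 1)) (10 ^ ℓ) | y / 10 ^ (ℓ + 1 - j - k) % 10 ^ k = blockValue B} := by
  rw [occNoSeg, card_filter, sum_product_right]
  refine sum_congr rfl fun j hj => ?_
  rw [card_filter]
  refine sum_congr rfl fun y _ => if_congr ?_ rfl rfl
  rw [← digits_eq_iff_eq_blockValue B (Nat.mod_lt _ (by positivity))]
  refine forall_congr' fun i => ?_
  rw [mem_Icc] at hj
  rw [div_pow_mod_pow_div_pow_mod _ _ _ (by omega),
    show ℓ + 1 - j - k + (k - 1 - i) = ℓ - (j + i) by omega]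

/-- If `B₁` has nonzero first digit and `B₂` has first digit zero (both of length
`k ≥ 1`), then for every `ℓ ≥ k`, `occ_no(B₁, s_ℓ) − occ_no(B₂, s_ℓ) = 10^{ℓ−k}`. -/
theorem occNoSeg_diff (k ℓ : ℕ) (hk : 0 < k) (B₁ B₂ : Fin k → Fin 10)
    (h₁ : (B₁ ⟨0, hk⟩ : ℕ) ≠ 0) (h₂ : (B₂ ⟨0, hk⟩ : ℕ) = 0) (hℓ : k ≤ ℓ) :
    (occNoSeg B₁ ℓ : ℤ) - (occNoSeg B₂ ℓ : ℤ) = 10 ^ (ℓ - k) := by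
  have hinner : ∀ j ∈ Ioc 1 (ℓ - k + 1),
      #{y ∈ Ico (10 ^ (ℓ - 1)) (10 ^ ℓ) | y / 10 ^ (ℓ + 1 - j - k) % 10 ^ k = blockValue B₁} =
      #{y ∈ Ico (10 ^ (ℓ - 1)) (10 ^ ℓ) | y / 10 ^ (ℓ + 1 - j - k) % 10 ^ k = blockValue B₂} := by
    intro j hj
    rw [mem_Ioc] at hj
    rw [card_filter_window_eq_of_lt (by norm_num) (by omega) (blockValue_lt B₁),
      card_filter_window_eq_of_lt (by norm_num) (by omega) (blockValue_lt B₂)]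
  have hlead₁ : 10 ^ (k - 1) ≤ blockValue B₁ := (le_blockValue_iff hk B₁).2 h₁
  have hlead₂ : ¬ 10 ^ (k - 1) ≤ blockValue B₂ := by simp [le_blockValue_iff hk B₂, h₂]
  rw [occNoSeg_eq_sum B₁ hℓ, occNoSeg_eq_sum B₂ hℓ, ← add_sum_Ioc_eq_sum_Icc (by omega),
    ← add_sum_Ioc_eq_sum_Icc (by omega), sum_congr rfl hinner,
    card_filter_window_eq_of_eq (by norm_num) hk (by omega) (blockValue_lt B₁),
    card_filter_window_eq_of_eq (by norm_num) hk (by omega) (blockValue_lt B₂),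
    if_pos hlead₁, if_neg hlead₂, Nat.add_sub_cancel]
  push_cast
  ring
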